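/- Let Q : ℝ² → ℝ be a convex function and Ξ = conv{ξ¹, ξ², ξ³} a 2-simplex in ℝ² with μ ∈ Ξ written uniquely as μ = p₁ξ¹ + p₂ξ² + p₃ξ³ with pₖ ≥ 0 summing to 1. Then for every probability measure ℙ on Ξ with barycenter μ (i.e., ∫ ξ dℙ = μ), we have ∫ Q(ξ) dℙ ≤ p₁Q(ξ¹) + p₂Q(ξ²) + p₃Q(ξ³). -/

import Mathlib

/-!
On the simplex the barycentric coordinates `λₖ` are nonnegative and sum to one, so convexity
gives the pointwise bound `Q x ≤ ∑ₖ λₖ(x) Q(ξₖ)`. Integrating it against `ℙ`, each `λₖ` is affine,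
hence `∫ λₖ dℙ = λₖ(∫ x dℙ) = λₖ(μ) = pₖ`.
-/

open MeasureTheory

theorem MeasureTheory.Integrable.of_continuousOn_of_ae_mem_compact {X F : Type*}
    [TopologicalSpace X] [T2Space X] [MeasurableSpace X] [OpensMeasurableSpace X]
    [NormedAddCommGroup F] {f : X → F} {K : Set X}
    (hf : ContinuousOn f K) (hK : IsCompact K) (ℙ : Measure X) [IsFiniteMeasure ℙ]
    (hae : ∀ᵐ x ∂ℙ, x ∈ K) : Integrable f ℙ := by
  have h := hf.integrableOn_compact (μ := ℙ) hK
  rwa [IntegrableOn, Measure.restrict_eq_self_of_ae_mem hae] at h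

variable {E : Type*} [NormedAddCommGroup E] [NormedSpace ℝ E]

theorem AffineMap.integral_comp_eq_apply_integral [FiniteDimensional ℝ E] [MeasurableSpace E]
    {F : Type*} [NormedAddCommGroup F] [NormedSpace ℝ F] [CompleteSpace F]
    (f : E →ᵃ[ℝ] F) (ℙ : Measure E) [IsProbabilityMeasure ℙ]
    (hid : Integrable (fun x => x) ℙ) :
    ∫ x, f x ∂ℙ = f (∫ x, x ∂ℙ) := by
  let L : E →L[ℝ] F := LinearMap.toContinuousLinearMap f.linear
  have hdecomp : ∀ x, f x = L x + f 0 := fun x => congrFun f.decomp x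
  calc ∫ x, f x ∂ℙ = ∫ x, (L x + f 0) ∂ℙ := integral_congr_ae (ae_of_all _ hdecomp)
    _ = L (∫ x, x ∂ℙ) + f 0 := by
      rw [integral_add (L.integrable_comp hid) (integrable_const _), integral_const,
        probReal_univ, one_smul, L.integral_comp_comm hid]
    _ = f (∫ x, x ∂ℙ) := (hdecomp _).symm

theorem AffineBasis.convexOn_le_sum_coord_mul {ι : Type*} [Fintype ι] (b : AffineBasis ι ℝ E)
    {Q : E → ℝ} (hQ : ConvexOn ℝ (convexHull ℝ (Set.range b)) Q) {x : E}
    (hx : x ∈ convexHull ℝ (Set.range b)) :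
    Q x ≤ ∑ k, b.coord k x * Q (b k) := by
  have hw : ∀ k, 0 ≤ b.coord k x := by rwa [b.convexHull_eq_nonneg_coord] at hx
  have h := hQ.map_sum_le (t := Finset.univ) (fun k _ => hw k) (b.sum_coord_apply_eq_one x)
    (fun k _ => subset_convexHull ℝ _ (Set.mem_range_self k))
  rwa [b.linear_combination_coord_eq_self x] at h

theorem AffineBasis.integral_le_sum_coord_integral_mul [FiniteDimensional ℝ E]
    [MeasurableSpace E] [OpensMeasurableSpace E] {ι : Type*} [Fintype ι] (b : AffineBasis ι ℝ E)
    {Q : E → ℝ}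
    (hQ : ConvexOn ℝ (convexHull ℝ (Set.range b)) Q)
    (hQc : ContinuousOn Q (convexHull ℝ (Set.range b)))
    (ℙ : Measure E) [IsProbabilityMeasure ℙ] (hae : ∀ᵐ x ∂ℙ, x ∈ convexHull ℝ (Set.range b)) :
    ∫ x, Q x ∂ℙ ≤ ∑ k, b.coord k (∫ x, x ∂ℙ) * Q (b k) := by
  have hK : IsCompact (convexHull ℝ (Set.range b)) :=
    (Set.finite_range b).isCompact_convexHull ℝ
  have hid : Integrable (fun x => x) ℙ :=
    .of_continuousOn_of_ae_mem_compact continuousOn_id hK ℙ hae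
  have hcoord : ∀ k, Integrable (fun x => b.coord k x) ℙ := fun k =>
    .of_continuousOn_of_ae_mem_compact (b.coord k).continuous_of_finiteDimensional.continuousOn
      hK ℙ hae
  calc ∫ x, Q x ∂ℙ ≤ ∫ x, ∑ k, b.coord k x * Q (b k) ∂ℙ :=
        integral_mono_ae (.of_continuousOn_of_ae_mem_compact hQc hK ℙ hae)
          (integrable_finsetSum _ fun k _ => (hcoord k).mul_const _)
          (hae.mono fun x hx => b.convexOn_le_sum_coord_mul hQ hx)
    _ = ∑ k, (∫ x, b.coord k x ∂ℙ) * Q (b k) := by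
        rw [integral_finsetSum _ fun k _ => (hcoord k).mul_const _]
        simp_rw [integral_mul_const]
    _ = ∑ k, b.coord k (∫ x, x ∂ℙ) * Q (b k) := by
        simp_rw [(b.coord _).integral_comp_eq_apply_integral ℙ hid]

theorem stmt_1_general (Q : ℝ × ℝ → ℝ) (hQ : ConvexOn ℝ Set.univ Q)
    (ξ : Fin 3 → ℝ × ℝ) (hξ : AffineIndependent ℝ ξ)
    (p : Fin 3 → ℝ) (hp1 : ∑ k, p k = 1)
    (μ : ℝ × ℝ) (hμ : ∑ k, p k • ξ k = μ)
    (ℙ : Measure (ℝ × ℝ)) [IsProbabilityMeasure ℙ]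
    (hsupp : ℙ (convexHull ℝ (Set.range ξ)) = 1)
    (hmean : (∫ x, x ∂ℙ) = μ) :
    (∫ x, Q x ∂ℙ) ≤ ∑ k, p k * Q (ξ k) := by
  have hspan : affineSpan ℝ (Set.range ξ) = ⊤ := by
    rw [hξ.affineSpan_eq_top_iff_card_eq_finrank_add_one]
    simp [Module.finrank_prod]
  let b : AffineBasis (Fin 3) ℝ (ℝ × ℝ) := ⟨ξ, hξ, hspan⟩
  have hcoord : ∀ k, b.coord k μ = p k := fun k => by
    rw [← hμ, ← Finset.univ.affineCombination_eq_linear_combination ξ p hp1]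
    exact b.coord_apply_combination_of_mem (Finset.mem_univ k) hp1
  have hclosed : IsClosed (convexHull ℝ (Set.range ξ)) :=
    ((Set.finite_range ξ).isCompact_convexHull ℝ).isClosed
  have hae : ∀ᵐ x ∂ℙ, x ∈ convexHull ℝ (Set.range ξ) :=
    (ae_mem_iff_measure_eq hclosed.measurableSet.nullMeasurableSet).2
      (by rw [hsupp, measure_univ])
  calc ∫ x, Q x ∂ℙ ≤ ∑ k, b.coord k (∫ x, x ∂ℙ) * Q (b k) :=
        b.integral_le_sum_coord_integral_mul
          (hQ.subset (Set.subset_univ _) (convex_convexHull ℝ _))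
          ((hQ.continuousOn isOpen_univ).mono (Set.subset_univ _)) ℙ hae
    _ = ∑ k, p k * Q (ξ k) := by simp only [hmean, hcoord]; rfl

/-- Any probability measure supported on a 2-simplex with barycenter μ has
expectation of a convex function at most the barycentric combination of vertex values. -/
theorem stmt_1 (Q : ℝ × ℝ → ℝ) (hQ : ConvexOn ℝ Set.univ Q)
    (ξ : Fin 3 → ℝ × ℝ) (hξ : AffineIndependent ℝ ξ)
    (p : Fin 3 → ℝ) (hp0 : ∀ k, 0 ≤ p k) (hp1 : ∑ k, p k = 1)
    (μ : ℝ × ℝ) (hμ : ∑ k, p k • ξ k = μ)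
    (ℙ : Measure (ℝ × ℝ)) [IsProbabilityMeasure ℙ]
    (hsupp : ℙ (convexHull ℝ (Set.range ξ)) = 1)
    (hmean : (∫ x, x ∂ℙ) = μ) :
    (∫ x, Q x ∂ℙ) ≤ ∑ k, p k * Q (ξ k) :=
  stmt_1_general Q hQ ξ hξ p hp1 μ hμ ℙ hsupp hmean
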